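/- arXiv:2106.01513 — 5 statements merged into one kernel-verified Lean document; each statement's English description precedes it below -/
import Mathlib

section
/- Let x, y, z, w be positive integers, and let Γ_XY (x×y), Γ_XZ (x×z), Γ_XW (x×w), Γ_ZY (z×y), Γ_ZZ (z×z), Γ_ZW (z×w) be real matrices, where Γ_ZZ is symmetric positive definite. Then the 2×3 block matrix Ξ = [[Γ_XY, Γ_XZ, Γ_XW],[Γ_ZY, Γ_ZZ, Γ_ZW]] (of size (x+z)×(y+z+w)) has rank equal to z if and only if both matrix equations Γ_XY = Γ_XZ · Γ_ZZ⁻¹ · Γ_ZY and Γ_XW = Γ_XZ · Γ_ZZ⁻¹ · Γ_ZW hold. -/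
/-!
Write `Ξ` as the rows `T = [ΓXY ΓXZ ΓXW]` stacked on `R = [ΓZY ΓZZ ΓZW]`. Since `R` contains the
invertible block `ΓZZ`, it has rank `z`. Stacking rows onto `R` preserves its rank exactly when
the new rows lie in the row space of `R`, i.e. `T = C * R` for some `C`; comparing the middle
blocks forces `C = ΓXZ * ΓZZ⁻¹`, and the outer blocks give the two equations.
-/

open Matrix

namespace Matrix

variable {K m m₁ m₂ n n₁ n₂ : Type*} [Field K]

theorem span_row_fromRows (T : Matrix m₁ n K) (R : Matrix m₂ n K) :
    Submodule.span K (Set.range (fromRows T R).row) =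
      Submodule.span K (Set.range T.row) ⊔ Submodule.span K (Set.range R.row) := by
  rw [← Submodule.span_union, ← Set.Sum.elim_range]
  rfl

theorem exists_eq_mul_iff_span_row_le [Fintype m₂] (T : Matrix m₁ n K) (R : Matrix m₂ n K) :
    (∃ C : Matrix m₁ m₂ K, T = C * R) ↔
      Submodule.span K (Set.range T.row) ≤ Submodule.span K (Set.range R.row) := by
  rw [Submodule.span_le, ← range_vecMulLinear, Set.range_subset_iff]
  constructor
  · rintro ⟨C, rfl⟩ i
    exact ⟨C i, (mul_apply_eq_vecMul C R i).symm⟩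
  · intro hT
    choose C hC using hT
    exact ⟨of C, funext fun i => ((mul_apply_eq_vecMul _ R i).trans (hC i)).symm⟩

theorem rank_fromRows_eq_rank_iff [Fintype m₁] [Fintype m₂] [Fintype n] (T : Matrix m₁ n K)
    (R : Matrix m₂ n K) :
    (fromRows T R).rank = R.rank ↔ ∃ C : Matrix m₁ m₂ K, T = C * R := by
  rw [exists_eq_mul_iff_span_row_le, rank_eq_finrank_span_row, rank_eq_finrank_span_row,
    span_row_fromRows, ← sup_eq_right]
  exact ⟨fun h => (Submodule.eq_of_le_of_finrank_eq le_sup_right h.symm).symm,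
    fun h => by rw [h]⟩

theorem rank_le_rank_fromCols_left [Fintype n₁] [Fintype n₂] (A : Matrix m n₁ K)
    (B : Matrix m n₂ K) :
    A.rank ≤ (fromCols A B).rank :=
  rank_submatrix_le (fromCols A B) id Sum.inl

theorem rank_le_rank_fromCols_right [Fintype n₁] [Fintype n₂] (A : Matrix m n₁ K)
    (B : Matrix m n₂ K) :
    B.rank ≤ (fromCols A B).rank :=
  rank_submatrix_le (fromCols A B) id Sum.inr

theorem rank_fromCols_fromCols_of_isUnit [Fintype m] [DecidableEq m] [Fintype n₁] [Fintype n₂]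
    (B : Matrix m n₁ K) {A : Matrix m m K} (hA : IsUnit A) (D : Matrix m n₂ K) :
    (fromCols B (fromCols A D)).rank = Fintype.card m :=
  le_antisymm (rank_le_card_height _) <|
    (rank_of_isUnit A hA).symm.le.trans <|
      (rank_le_rank_fromCols_left A D).trans (rank_le_rank_fromCols_right B _)

theorem exists_fromCols_eq_mul_fromCols_iff [Fintype m] [DecidableEq m] {A : Matrix m m K}
    (hA : IsUnit A) (B : Matrix m n₁ K) (D : Matrix m n₂ K) (P : Matrix m₁ n₁ K)
    (Q : Matrix m₁ m K) (S : Matrix m₁ n₂ K) :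
    (∃ C : Matrix m₁ m K, fromCols P (fromCols Q S) = C * fromCols B (fromCols A D)) ↔
      P = Q * A⁻¹ * B ∧ S = Q * A⁻¹ * D := by
  have hdet : IsUnit A.det := (isUnit_iff_isUnit_det A).mp hA
  simp only [mul_fromCols, fromCols_ext_iff]
  constructor
  · rintro ⟨C, hP, hQ, hS⟩
    have hC : Q * A⁻¹ = C := by rw [hQ, mul_nonsing_inv_cancel_right _ _ hdet]
    exact ⟨hC ▸ hP, hC ▸ hS⟩
  · rintro ⟨hP, hS⟩
    exact ⟨Q * A⁻¹, hP, (nonsing_inv_mul_cancel_right _ _ hdet).symm, hS⟩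

end Matrix

theorem stmt_0_general (x y z w : ℕ)
    (ΓXY : Matrix (Fin x) (Fin y) ℝ) (ΓXZ : Matrix (Fin x) (Fin z) ℝ)
    (ΓXW : Matrix (Fin x) (Fin w) ℝ) (ΓZY : Matrix (Fin z) (Fin y) ℝ)
    (ΓZZ : Matrix (Fin z) (Fin z) ℝ) (ΓZW : Matrix (Fin z) (Fin w) ℝ)
    (hZZ : ΓZZ.PosDef) :
    (Matrix.fromBlocks ΓXY (Matrix.fromCols ΓXZ ΓXW) ΓZY
        (Matrix.fromCols ΓZZ ΓZW)).rank = z ↔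
      (ΓXY = ΓXZ * ΓZZ⁻¹ * ΓZY ∧ ΓXW = ΓXZ * ΓZZ⁻¹ * ΓZW) := by
  rw [← fromRows_fromCols_eq_fromBlocks, ← exists_fromCols_eq_mul_fromCols_iff hZZ.isUnit,
    ← rank_fromRows_eq_rank_iff, rank_fromCols_fromCols_of_isUnit _ hZZ.isUnit, Fintype.card_fin]

/-- For real matrices with `ΓZZ` symmetric positive definite, the 2×3 block
matrix `Ξ = [[ΓXY, ΓXZ, ΓXW], [ΓZY, ΓZZ, ΓZW]]` has rank `z` if and only if
`ΓXY = ΓXZ ΓZZ⁻¹ ΓZY` and `ΓXW = ΓXZ ΓZZ⁻¹ ΓZW`. -/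
theorem stmt_0 (x y z w : ℕ) (hx : 0 < x) (hy : 0 < y) (hz : 0 < z) (hw : 0 < w)
    (ΓXY : Matrix (Fin x) (Fin y) ℝ) (ΓXZ : Matrix (Fin x) (Fin z) ℝ)
    (ΓXW : Matrix (Fin x) (Fin w) ℝ) (ΓZY : Matrix (Fin z) (Fin y) ℝ)
    (ΓZZ : Matrix (Fin z) (Fin z) ℝ) (ΓZW : Matrix (Fin z) (Fin w) ℝ)
    (hZZ : ΓZZ.PosDef) :
    (Matrix.fromBlocks ΓXY (Matrix.fromCols ΓXZ ΓXW) ΓZY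
        (Matrix.fromCols ΓZZ ΓZW)).rank = z ↔
      (ΓXY = ΓXZ * ΓZZ⁻¹ * ΓZY ∧ ΓXW = ΓXZ * ΓZZ⁻¹ * ΓZW) :=
  stmt_0_general x y z w ΓXY ΓXZ ΓXW ΓZY ΓZZ ΓZW hZZ
end

section
/- Let 0 < r < 1 and let a, b, y be real numbers with |y| ≤ r. Then the following two inequalities hold: (i) exp( −(1/(2(1−y²)))(a² − 2y·a·b + b²) ) ≤ exp( −(a² + b²)/2 + (r/(1−r²))·|a·b| ); (ii) exp( −(1/(2(1−r²)))( a² + b² + 2r·|a·b| ) ) ≤ exp( −(1/(2(1−y²)))(a² − 2y·a·b + b²) ). -/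
/-- Two-sided pointwise bounds on the bivariate-Gaussian exponential,
uniform over correlation parameters `y` with `|y| ≤ r < 1`. -/
theorem stmt_7 (r a b y : ℝ) (hr0 : 0 < r) (hr1 : r < 1) (hy : |y| ≤ r) :
    Real.exp (-(1 / (2 * (1 - y ^ 2))) * (a ^ 2 - 2 * y * a * b + b ^ 2)) ≤
        Real.exp (-(a ^ 2 + b ^ 2) / 2 + (r / (1 - r ^ 2)) * |a * b|) ∧
      Real.exp (-(1 / (2 * (1 - r ^ 2))) * (a ^ 2 + b ^ 2 + 2 * r * |a * b|)) ≤
        Real.exp (-(1 / (2 * (1 - y ^ 2))) * (a ^ 2 - 2 * y * a * b + b ^ 2)) := by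
  have hy2 : y ^ 2 ≤ r ^ 2 := by
    have := sq_abs y ▸ pow_le_pow_left₀ (abs_nonneg y) hy 2
    simpa [sq_abs] using this
  have h1y : 0 < 1 - y ^ 2 := by nlinarith
  have h1r : 0 < 1 - r ^ 2 := by nlinarith
  have habs : |y * (a * b)| ≤ r * |a * b| := by
    rw [abs_mul]
    exact mul_le_mul_of_nonneg_right hy (abs_nonneg _)
  have h3 : -(r * |a * b|) ≤ y * (a * b) := neg_le_of_abs_le habs
  have h4 : y * (a * b) ≤ r * |a * b| := le_of_abs_le habs
  have h2 : 2 * |a * b| ≤ a ^ 2 + b ^ 2 := by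
    rcases abs_cases (a * b) with ⟨h, _⟩ | ⟨h, _⟩ <;> nlinarith [sq_nonneg (a - b), sq_nonneg (a + b)]
  have habnn : 0 ≤ |a * b| := abs_nonneg _
  constructor
  · apply Real.exp_le_exp.mpr
    rw [← sub_nonneg]
    have key : (-(a ^ 2 + b ^ 2) / 2 + r / (1 - r ^ 2) * |a * b|) -
        (-(1 / (2 * (1 - y ^ 2))) * (a ^ 2 - 2 * y * a * b + b ^ 2)) =
        ((a ^ 2 - 2 * y * a * b + b ^ 2) * (1 - r ^ 2) - (1 - y ^ 2) * (1 - r ^ 2) * (a ^ 2 + b ^ 2)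
          + 2 * (1 - y ^ 2) * r * |a * b|) / (2 * (1 - y ^ 2) * (1 - r ^ 2)) := by
      field_simp
      ring
    rw [key]
    apply div_nonneg _ (by positivity)
    nlinarith [mul_le_mul_of_nonneg_left h2 (mul_nonneg h1r.le (sq_nonneg y)),
      mul_le_mul_of_nonneg_left h3 h1r.le,
      mul_nonneg (mul_nonneg habnn hr0.le) (sub_nonneg.mpr hy2),
      mul_nonneg (mul_nonneg habnn h1r.le) (sq_nonneg y)]
  · apply Real.exp_le_exp.mpr
    rw [← sub_nonneg]
    have key : (-(1 / (2 * (1 - y ^ 2))) * (a ^ 2 - 2 * y * a * b + b ^ 2)) -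
        (-(1 / (2 * (1 - r ^ 2))) * (a ^ 2 + b ^ 2 + 2 * r * |a * b|)) =
        ((a ^ 2 + b ^ 2 + 2 * r * |a * b|) * (1 - y ^ 2) -
          (a ^ 2 - 2 * y * a * b + b ^ 2) * (1 - r ^ 2)) / (2 * (1 - y ^ 2) * (1 - r ^ 2)) := by
      field_simp
      ring
    rw [key]
    apply div_nonneg _ (by positivity)
    nlinarith [mul_le_mul_of_nonneg_left h3 h1r.le,
      mul_nonneg (mul_nonneg hr0.le habnn) (sub_nonneg.mpr hy2),
      mul_nonneg (add_nonneg (add_nonneg (sq_nonneg a) (sq_nonneg b)) (mul_nonneg (by positivity) habnn)) (sub_nonneg.mpr hy2)]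
end

section
/- Let σ₁, σ₂ > 0, let 0 < r < 1 and 0 ≤ ρ ≤ r, let n₁, n₂ be positive integers, let c₁, …, c_{n₁−1} and d₁, …, d_{n₂−1} be real numbers, and let Δ₁, …, Δ_{n₁−1} ≥ 0 and Δ'₁, …, Δ'_{n₂−1} ≥ 0. Define I(ρ) := Σ_{i=1}^{n₁−1} Σ_{j=1}^{n₂−1} Δᵢ Δ'ⱼ ∫₀^{ρ} (2π√(1−y²))⁻¹ · exp( −(1/(2(1−y²)))( cᵢ²/σ₁² − 2y cᵢ dⱼ/(σ₁σ₂) + dⱼ²/σ₂² ) ) dy. Then (arcsin(ρ)/(2π)) · Σᵢ Σⱼ Δᵢ Δ'ⱼ exp( −(1/(2(1−r²)))( cᵢ²/σ₁² + dⱼ²/σ₂² + 2r|cᵢ dⱼ|/(σ₁σ₂) ) ) ≤ I(ρ) ≤ (arcsin(ρ)/(2π)) · Σᵢ Σⱼ Δᵢ Δ'ⱼ exp( −(1/2)( cᵢ²/σ₁² + dⱼ²/σ₂² ) + (r/(1−r²)) |cᵢ dⱼ|/(σ₁σ₂) ). -/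
/-!
For `0 ≤ y ≤ ρ ≤ r < 1` the exponent of the bivariate normal density at `(cᵢ/σ₁, dⱼ/σ₂)` with
correlation `y` lies between two constants that depend on `r` only: the quadratic form
`a² - 2yab + b²` is squeezed between `0` and `a² + b² + 2r|ab|`, while `1 - y² ≥ 1 - r²` and
`y/(1 - y²) ≤ r/(1 - r²)`. Pulling these constants out of each integral leaves
`∫₀^ρ (2π√(1 - y²))⁻¹ dy = arcsin ρ / (2π)`, and the nonnegative weights `Δᵢ Δ'ⱼ` preserve both
inequalities in the double sum.
-/

open Real Set

theorem integral_inv_sqrt_one_sub_sq {ρ : ℝ} (hρ0 : -1 < ρ) (hρ1 : ρ < 1) :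
    ∫ y in (0 : ℝ)..ρ, (√(1 - y ^ 2))⁻¹ = arcsin ρ := by
  have hsub : uIcc 0 ρ ⊆ Ioo (-1) 1 :=
    ordConnected_Ioo.uIcc_subset (show (0 : ℝ) ∈ Ioo (-1) 1 by norm_num) ⟨hρ0, hρ1⟩
  have hderiv : ∀ y ∈ uIcc 0 ρ, HasDerivAt arcsin (√(1 - y ^ 2))⁻¹ y := fun y hy => by
    simpa [one_div] using hasDerivAt_arcsin (hsub hy).1.ne' (hsub hy).2.ne
  have hcont : ContinuousOn (fun y : ℝ => (√(1 - y ^ 2))⁻¹) (uIcc 0 ρ) :=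
    ContinuousOn.inv₀ (by fun_prop) fun y hy => by
      have := hsub hy
      exact (sqrt_pos.2 (by nlinarith [this.1, this.2])).ne'
  rw [intervalIntegral.integral_eq_sub_of_hasDerivAt hderiv hcont.intervalIntegrable,
    arcsin_zero, sub_zero]

section ArcsinWeight

variable {ρ : ℝ} {f : ℝ → ℝ}

theorem integral_inv_two_pi_sqrt_mul_const (hρ0 : -1 < ρ) (hρ1 : ρ < 1) (K : ℝ) :
    ∫ y in (0 : ℝ)..ρ, (2 * π * √(1 - y ^ 2))⁻¹ * K = arcsin ρ / (2 * π) * K := by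
  simp_rw [mul_inv, mul_comm _ K, ← mul_assoc]
  rw [intervalIntegral.integral_const_mul, integral_inv_sqrt_one_sub_sq hρ0 hρ1]
  ring

theorem continuousOn_inv_two_pi_sqrt (hρ0 : 0 ≤ ρ) (hρ1 : ρ < 1) :
    ContinuousOn (fun y : ℝ => (2 * π * √(1 - y ^ 2))⁻¹) (Icc 0 ρ) :=
  ContinuousOn.inv₀ (by fun_prop) fun y hy =>
    (mul_pos two_pi_pos (sqrt_pos.2 (by nlinarith [hy.1, hy.2]))).ne'

theorem arcsin_div_two_pi_mul_le_integral {K : ℝ} (hρ0 : 0 ≤ ρ) (hρ1 : ρ < 1)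
    (hf : ContinuousOn f (Icc 0 ρ)) (hK : ∀ y ∈ Icc 0 ρ, K ≤ f y) :
    arcsin ρ / (2 * π) * K ≤ ∫ y in (0 : ℝ)..ρ, (2 * π * √(1 - y ^ 2))⁻¹ * f y := by
  have hw := continuousOn_inv_two_pi_sqrt hρ0 hρ1
  rw [← integral_inv_two_pi_sqrt_mul_const (by linarith) hρ1]
  refine intervalIntegral.integral_mono_on hρ0 ?_ ?_ fun y hy => ?_
  · exact (hw.mul continuousOn_const).intervalIntegrable_of_Icc hρ0
  · exact (hw.mul hf).intervalIntegrable_of_Icc hρ0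
  · exact mul_le_mul_of_nonneg_left (hK y hy) (by positivity)

theorem integral_le_arcsin_div_two_pi_mul {K : ℝ} (hρ0 : 0 ≤ ρ) (hρ1 : ρ < 1)
    (hf : ContinuousOn f (Icc 0 ρ)) (hK : ∀ y ∈ Icc 0 ρ, f y ≤ K) :
    ∫ y in (0 : ℝ)..ρ, (2 * π * √(1 - y ^ 2))⁻¹ * f y ≤ arcsin ρ / (2 * π) * K := by
  have hw := continuousOn_inv_two_pi_sqrt hρ0 hρ1
  rw [← integral_inv_two_pi_sqrt_mul_const (by linarith) hρ1]
  refine intervalIntegral.integral_mono_on hρ0 ?_ ?_ fun y hy => ?_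
  · exact (hw.mul hf).intervalIntegrable_of_Icc hρ0
  · exact (hw.mul continuousOn_const).intervalIntegrable_of_Icc hρ0
  · exact mul_le_mul_of_nonneg_left (hK y hy) (by positivity)

end ArcsinWeight

/-- The exponent of the standard bivariate normal density with correlation `y` at `(a, b)`. -/
noncomputable def gaussianExponent (y a b : ℝ) : ℝ :=
  -(1 / (2 * (1 - y ^ 2))) * (a ^ 2 - 2 * y * a * b + b ^ 2)

section GaussianExponent

variable {r y a b : ℝ}

theorem le_gaussianExponent (hy0 : 0 ≤ y) (hyr : y ≤ r) (hr1 : r < 1) :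
    -(1 / (2 * (1 - r ^ 2))) * (a ^ 2 + b ^ 2 + 2 * r * |a * b|) ≤ gaussianExponent y a b := by
  have hq : 0 < 1 - r ^ 2 := by nlinarith
  have hqp : 1 - r ^ 2 ≤ 1 - y ^ 2 := by nlinarith
  have hab : 2 * |a * b| ≤ a ^ 2 + b ^ 2 := by
    simpa only [abs_mul, mul_assoc, sq_abs] using two_mul_le_add_sq |a| |b|
  have hyab : |y * (a * b)| ≤ |a * b| := by
    rw [abs_mul, abs_of_nonneg hy0]
    exact mul_le_of_le_one_left (abs_nonneg _) (by linarith)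
  have hu : 0 ≤ a ^ 2 - 2 * y * a * b + b ^ 2 := by
    linarith [le_abs_self (y * (a * b))]
  have huv : a ^ 2 - 2 * y * a * b + b ^ 2 ≤ a ^ 2 + b ^ 2 + 2 * r * |a * b| := by
    nlinarith [neg_abs_le (a * b), abs_nonneg (a * b)]
  simp only [gaussianExponent, neg_mul, one_div_mul_eq_div, neg_le_neg_iff]
  calc (a ^ 2 - 2 * y * a * b + b ^ 2) / (2 * (1 - y ^ 2))
      ≤ (a ^ 2 - 2 * y * a * b + b ^ 2) / (2 * (1 - r ^ 2)) := by gcongr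
    _ ≤ (a ^ 2 + b ^ 2 + 2 * r * |a * b|) / (2 * (1 - r ^ 2)) := by gcongr

theorem gaussianExponent_le (hy0 : 0 ≤ y) (hyr : y ≤ r) (hr1 : r < 1) :
    gaussianExponent y a b ≤ -(1 / 2) * (a ^ 2 + b ^ 2) + r / (1 - r ^ 2) * |a * b| := by
  have hq : 0 < 1 - r ^ 2 := by nlinarith
  have hp : 0 < 1 - y ^ 2 := by nlinarith
  have hsplit : gaussianExponent y a b
      = -((a ^ 2 + b ^ 2) / (2 * (1 - y ^ 2))) + y / (1 - y ^ 2) * (a * b) := by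
    unfold gaussianExponent
    field_simp
    ring
  have hsq : (a ^ 2 + b ^ 2) / 2 ≤ (a ^ 2 + b ^ 2) / (2 * (1 - y ^ 2)) := by
    gcongr
    nlinarith
  have hcoef : y / (1 - y ^ 2) ≤ r / (1 - r ^ 2) := by
    rw [div_le_div_iff₀ hp hq]
    nlinarith [mul_nonneg (mul_nonneg (hy0.trans hyr) hy0) (sub_nonneg.2 hyr)]
  have hcross : y / (1 - y ^ 2) * (a * b) ≤ r / (1 - r ^ 2) * |a * b| :=
    calc y / (1 - y ^ 2) * (a * b) ≤ y / (1 - y ^ 2) * |a * b| := by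
          gcongr; exact le_abs_self _
      _ ≤ r / (1 - r ^ 2) * |a * b| := by gcongr
  linarith

end GaussianExponent

theorem integral_exp_gaussianExponent_bounds {σ₁ σ₂ r ρ : ℝ} (hσ₁ : 0 < σ₁) (hσ₂ : 0 < σ₂)
    (hr1 : r < 1) (hρ0 : 0 ≤ ρ) (hρr : ρ ≤ r) (c d : ℝ) :
    arcsin ρ / (2 * π) *
        exp (-(1 / (2 * (1 - r ^ 2))) *
          (c ^ 2 / σ₁ ^ 2 + d ^ 2 / σ₂ ^ 2 + 2 * r * |c * d| / (σ₁ * σ₂))) ≤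
      (∫ y in (0 : ℝ)..ρ, (2 * π * √(1 - y ^ 2))⁻¹ *
        exp (-(1 / (2 * (1 - y ^ 2))) *
          (c ^ 2 / σ₁ ^ 2 - 2 * y * c * d / (σ₁ * σ₂) + d ^ 2 / σ₂ ^ 2))) ∧
    (∫ y in (0 : ℝ)..ρ, (2 * π * √(1 - y ^ 2))⁻¹ *
        exp (-(1 / (2 * (1 - y ^ 2))) *
          (c ^ 2 / σ₁ ^ 2 - 2 * y * c * d / (σ₁ * σ₂) + d ^ 2 / σ₂ ^ 2))) ≤
      arcsin ρ / (2 * π) *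
        exp (-(1 / 2) * (c ^ 2 / σ₁ ^ 2 + d ^ 2 / σ₂ ^ 2) +
          r / (1 - r ^ 2) * |c * d| / (σ₁ * σ₂)) := by
  have hρ1 : ρ < 1 := hρr.trans_lt hr1
  set a := c / σ₁
  set b := d / σ₂
  have hsq₁ : c ^ 2 / σ₁ ^ 2 = a ^ 2 := (div_pow c σ₁ 2).symm
  have hsq₂ : d ^ 2 / σ₂ ^ 2 = b ^ 2 := (div_pow d σ₂ 2).symm
  have hcross : |c * d| / (σ₁ * σ₂) = |a * b| := by
    rw [div_mul_div_comm, abs_div, abs_of_pos (mul_pos hσ₁ hσ₂)]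
  have hquad : ∀ y : ℝ, c ^ 2 / σ₁ ^ 2 - 2 * y * c * d / (σ₁ * σ₂) + d ^ 2 / σ₂ ^ 2
      = a ^ 2 - 2 * y * a * b + b ^ 2 := fun y => by
    rw [hsq₁, hsq₂, mul_assoc (2 * y), mul_div_assoc, ← div_mul_div_comm, ← mul_assoc]
  simp_rw [hquad, hsq₁, hsq₂, mul_div_assoc, hcross]
  have hcont : ContinuousOn (fun y => exp (gaussianExponent y a b)) (Icc 0 ρ) := by
    unfold gaussianExponent
    fun_prop (disch := intro y hy; nlinarith [hy.1, hy.2])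
  constructor
  · refine arcsin_div_two_pi_mul_le_integral hρ0 hρ1 hcont fun y hy => ?_
    exact exp_le_exp.2 (le_gaussianExponent hy.1 (hy.2.trans hρr) hr1)
  · refine integral_le_arcsin_div_two_pi_mul hρ0 hρ1 hcont fun y hy => ?_
    exact exp_le_exp.2 (gaussianExponent_le hy.1 (hy.2.trans hρr) hr1)

theorem stmt_8_general (σ₁ σ₂ r ρ : ℝ) (n₁ n₂ : ℕ) (c d Δ Δ' : ℕ → ℝ)
    (hσ₁ : 0 < σ₁) (hσ₂ : 0 < σ₂) (hr1 : r < 1)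
    (hρ0 : 0 ≤ ρ) (hρr : ρ ≤ r)
    (hΔ : ∀ i ∈ Finset.Icc 1 (n₁ - 1), 0 ≤ Δ i)
    (hΔ' : ∀ j ∈ Finset.Icc 1 (n₂ - 1), 0 ≤ Δ' j) :
    (Real.arcsin ρ / (2 * Real.pi)) *
        ∑ i ∈ Finset.Icc 1 (n₁ - 1), ∑ j ∈ Finset.Icc 1 (n₂ - 1),
          Δ i * Δ' j *
            Real.exp (-(1 / (2 * (1 - r ^ 2))) *
              ((c i) ^ 2 / σ₁ ^ 2 + (d j) ^ 2 / σ₂ ^ 2 +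
                2 * r * |c i * d j| / (σ₁ * σ₂))) ≤
      (∑ i ∈ Finset.Icc 1 (n₁ - 1), ∑ j ∈ Finset.Icc 1 (n₂ - 1),
        Δ i * Δ' j *
          ∫ y in (0 : ℝ)..ρ, (2 * Real.pi * Real.sqrt (1 - y ^ 2))⁻¹ *
            Real.exp (-(1 / (2 * (1 - y ^ 2))) *
              ((c i) ^ 2 / σ₁ ^ 2 - 2 * y * (c i) * (d j) / (σ₁ * σ₂) +
                (d j) ^ 2 / σ₂ ^ 2))) ∧
    (∑ i ∈ Finset.Icc 1 (n₁ - 1), ∑ j ∈ Finset.Icc 1 (n₂ - 1),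
        Δ i * Δ' j *
          ∫ y in (0 : ℝ)..ρ, (2 * Real.pi * Real.sqrt (1 - y ^ 2))⁻¹ *
            Real.exp (-(1 / (2 * (1 - y ^ 2))) *
              ((c i) ^ 2 / σ₁ ^ 2 - 2 * y * (c i) * (d j) / (σ₁ * σ₂) +
                (d j) ^ 2 / σ₂ ^ 2))) ≤
      (Real.arcsin ρ / (2 * Real.pi)) *
        ∑ i ∈ Finset.Icc 1 (n₁ - 1), ∑ j ∈ Finset.Icc 1 (n₂ - 1),
          Δ i * Δ' j *
            Real.exp (-(1 / 2) * ((c i) ^ 2 / σ₁ ^ 2 + (d j) ^ 2 / σ₂ ^ 2) +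
              (r / (1 - r ^ 2)) * |c i * d j| / (σ₁ * σ₂)) := by
  simp_rw [Finset.mul_sum, mul_left_comm (arcsin ρ / (2 * π))]
  have hw : ∀ i ∈ Finset.Icc 1 (n₁ - 1), ∀ j ∈ Finset.Icc 1 (n₂ - 1), 0 ≤ Δ i * Δ' j :=
    fun i hi j hj => mul_nonneg (hΔ i hi) (hΔ' j hj)
  constructor
  · gcongr with i hi j hj
    · exact hw i hi j hj
    · exact (integral_exp_gaussianExponent_bounds hσ₁ hσ₂ hr1 hρ0 hρr (c i) (d j)).1
  · gcongr with i hi j hj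
    · exact hw i hi j hj
    · exact (integral_exp_gaussianExponent_bounds hσ₁ hσ₂ hr1 hρ0 hρr (c i) (d j)).2

/-- Sandwich bounds on the covariance `I(ρ)` of two zero-mean jointly Gaussian
variables (standard deviations `σ₁, σ₂`, correlation `ρ` with `0 ≤ ρ ≤ r < 1`) after
non-uniform quantization with thresholds `cᵢ, dⱼ` and nonnegative level increments `Δᵢ, Δ'ⱼ`. -/
theorem stmt_8 (σ₁ σ₂ r ρ : ℝ) (n₁ n₂ : ℕ) (c d Δ Δ' : ℕ → ℝ)
    (hσ₁ : 0 < σ₁) (hσ₂ : 0 < σ₂) (hr0 : 0 < r) (hr1 : r < 1)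
    (hρ0 : 0 ≤ ρ) (hρr : ρ ≤ r) (hn₁ : 0 < n₁) (hn₂ : 0 < n₂)
    (hΔ : ∀ i ∈ Finset.Icc 1 (n₁ - 1), 0 ≤ Δ i)
    (hΔ' : ∀ j ∈ Finset.Icc 1 (n₂ - 1), 0 ≤ Δ' j) :
    (Real.arcsin ρ / (2 * Real.pi)) *
        ∑ i ∈ Finset.Icc 1 (n₁ - 1), ∑ j ∈ Finset.Icc 1 (n₂ - 1),
          Δ i * Δ' j *
            Real.exp (-(1 / (2 * (1 - r ^ 2))) *
              ((c i) ^ 2 / σ₁ ^ 2 + (d j) ^ 2 / σ₂ ^ 2 +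
                2 * r * |c i * d j| / (σ₁ * σ₂))) ≤
      (∑ i ∈ Finset.Icc 1 (n₁ - 1), ∑ j ∈ Finset.Icc 1 (n₂ - 1),
        Δ i * Δ' j *
          ∫ y in (0 : ℝ)..ρ, (2 * Real.pi * Real.sqrt (1 - y ^ 2))⁻¹ *
            Real.exp (-(1 / (2 * (1 - y ^ 2))) *
              ((c i) ^ 2 / σ₁ ^ 2 - 2 * y * (c i) * (d j) / (σ₁ * σ₂) +
                (d j) ^ 2 / σ₂ ^ 2))) ∧
    (∑ i ∈ Finset.Icc 1 (n₁ - 1), ∑ j ∈ Finset.Icc 1 (n₂ - 1),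
        Δ i * Δ' j *
          ∫ y in (0 : ℝ)..ρ, (2 * Real.pi * Real.sqrt (1 - y ^ 2))⁻¹ *
            Real.exp (-(1 / (2 * (1 - y ^ 2))) *
              ((c i) ^ 2 / σ₁ ^ 2 - 2 * y * (c i) * (d j) / (σ₁ * σ₂) +
                (d j) ^ 2 / σ₂ ^ 2))) ≤
      (Real.arcsin ρ / (2 * Real.pi)) *
        ∑ i ∈ Finset.Icc 1 (n₁ - 1), ∑ j ∈ Finset.Icc 1 (n₂ - 1),
          Δ i * Δ' j *
            Real.exp (-(1 / 2) * ((c i) ^ 2 / σ₁ ^ 2 + (d j) ^ 2 / σ₂ ^ 2) +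
              (r / (1 - r ^ 2)) * |c i * d j| / (σ₁ * σ₂)) :=
  stmt_8_general σ₁ σ₂ r ρ n₁ n₂ c d Δ Δ' hσ₁ hσ₂ hr1 hρ0 hρr hΔ hΔ'
end

section
/- Let k > 0 and let s be a real number with 1/2 < s ≤ 2π²/k². Then Σ_{n=1}^{∞} exp( −2π² n²/k² ) ≤ ( k² s/(2π²) )^s · e^{−s} · Σ_{n=1}^{∞} n^{−2s}, where the series Σ n^{−2s} converges (to the Riemann zeta value ζ(2s)) since 2s > 1. -/
open Real

lemma key_ineq (x s : ℝ) (hs : 0 < s) (hx : 0 < x) (hxs : x ≤ 1 / s) :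
    Real.exp (-(1 / x)) ≤ x ^ s * s ^ s * Real.exp (-s) := by
  have hxs' : 0 < x * s := mul_pos hx hs
  have hlog : Real.log (1 / (x * s)) ≤ 1 / (x * s) - 1 :=
    Real.log_le_sub_one_of_pos (by positivity)
  rw [Real.log_div one_ne_zero (ne_of_gt hxs'), Real.log_one,
    Real.log_mul (ne_of_gt hx) (ne_of_gt hs)] at hlog
  have h1 : -(1 / x) ≤ s * Real.log x + s * Real.log s + (-s) := by
    have := mul_le_mul_of_nonneg_left hlog (le_of_lt hs)
    have hrw : s * (1 / (x * s) - 1) = 1 / x - s := by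
      field_simp
    rw [hrw] at this
    nlinarith
  calc Real.exp (-(1 / x)) ≤ Real.exp (s * Real.log x + s * Real.log s + (-s)) :=
        Real.exp_le_exp.2 h1
    _ = x ^ s * s ^ s * Real.exp (-s) := by
        rw [Real.exp_add, Real.exp_add, Real.rpow_def_of_pos hx, Real.rpow_def_of_pos hs,
          mul_comm (Real.log x) s, mul_comm (Real.log s) s]

/-- For `k > 0` and `1/2 < s ≤ 2π²/k²`, the Gaussian-tail series is bounded
by a Riemann-zeta type series: `Σ_{n≥1} exp(−2π²n²/k²) ≤ (k²s/(2π²))ˢ e⁻ˢ Σ_{n≥1} n^{−2s}`,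
where the right-hand series converges since `2s > 1`. -/
theorem stmt_10 (k s : ℝ) (hk : 0 < k) (hs : 1 / 2 < s) (hs2 : s ≤ 2 * Real.pi ^ 2 / k ^ 2) :
    Summable (fun n : ℕ => ((n : ℝ) + 1) ^ (-(2 * s))) ∧
      (∑' n : ℕ, Real.exp (-(2 * Real.pi ^ 2 * ((n : ℝ) + 1) ^ 2) / k ^ 2)) ≤
        (k ^ 2 * s / (2 * Real.pi ^ 2)) ^ s * Real.exp (-s) *
          ∑' n : ℕ, ((n : ℝ) + 1) ^ (-(2 * s)) := by
  have hpi : (0:ℝ) < 2 * Real.pi ^ 2 := by positivity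
  have hs0 : (0:ℝ) < s := lt_trans (by norm_num) hs
  have hsum : Summable (fun n : ℕ => ((n : ℝ) + 1) ^ (-(2 * s))) := by
    have : Summable (fun n : ℕ => ((n:ℝ)) ^ (-(2 * s))) :=
      Real.summable_nat_rpow.2 (by linarith)
    have h2 := (summable_nat_add_iff 1).2 this
    simpa using h2
  refine ⟨hsum, ?_⟩
  -- pointwise bound
  have hpt : ∀ n : ℕ, Real.exp (-(2 * Real.pi ^ 2 * ((n : ℝ) + 1) ^ 2) / k ^ 2) ≤
      (k ^ 2 * s / (2 * Real.pi ^ 2)) ^ s * Real.exp (-s) * ((n : ℝ) + 1) ^ (-(2 * s)) := by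
    intro n
    have hn1 : (0:ℝ) < (n:ℝ) + 1 := by positivity
    set x := k ^ 2 / (2 * Real.pi ^ 2 * ((n : ℝ) + 1) ^ 2) with hxdef
    have hx : 0 < x := by positivity
    have hxs : x ≤ 1 / s := by
      rw [div_le_div_iff₀ (by positivity) hs0]
      have h1 : (1:ℝ) ≤ ((n:ℝ) + 1) ^ 2 := by nlinarith
      have h2 : s * k ^ 2 ≤ 2 * Real.pi ^ 2 :=
        (le_div_iff₀ (by positivity : (0:ℝ) < k^2)).1 hs2
      nlinarith
    have hkey := key_ineq x s hs0 hx hxs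
    have hL : -(2 * Real.pi ^ 2 * ((n : ℝ) + 1) ^ 2) / k ^ 2 = -(1 / x) := by
      rw [hxdef]; field_simp
    rw [hL]
    refine hkey.trans (le_of_eq ?_)
    have hx' : x ^ s = (k ^ 2 / (2 * Real.pi ^ 2)) ^ s * ((n:ℝ) + 1) ^ (-(2 * s)) := by
      rw [hxdef]
      have : k ^ 2 / (2 * Real.pi ^ 2 * ((n : ℝ) + 1) ^ 2)
          = (k ^ 2 / (2 * Real.pi ^ 2)) * (((n:ℝ) + 1) ^ 2)⁻¹ := by
        field_simp
      rw [this, Real.mul_rpow (by positivity) (by positivity),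
        ← Real.rpow_natCast ((n:ℝ)+1) 2, ← Real.rpow_neg_one, ← Real.rpow_natCast _ 2]
      rw [← Real.rpow_mul hn1.le, ← Real.rpow_mul hn1.le]
      norm_num
    have hks : (k ^ 2 * s / (2 * Real.pi ^ 2)) ^ s
        = (k ^ 2 / (2 * Real.pi ^ 2)) ^ s * s ^ s := by
      rw [← Real.mul_rpow (by positivity) hs0.le]
      ring_nf
    rw [hx', hks]
    ring
  have hsum2 : Summable (fun n : ℕ => (k ^ 2 * s / (2 * Real.pi ^ 2)) ^ s * Real.exp (-s) *
      ((n : ℝ) + 1) ^ (-(2 * s))) := hsum.mul_left _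
  exact Summable.tsum_le_tsum hpt
    (Summable.of_nonneg_of_le (fun n => (Real.exp_pos _).le) hpt hsum2)
    hsum2 |>.trans (le_of_eq (tsum_mul_left))
end

section
/- Let k₁, k₂ > 0, let 0 ≤ ρ < 1, and let θ be a real number with 0 < θ ≤ 4π²(1−ρ)/(k₁k₂). Then Σ_{n₁=1}^{∞} Σ_{n₂=1}^{∞} (n₁ n₂)^{−1} · exp( −4π² ( (1/2)(n₁/k₁)² + (1/2)(n₂/k₂)² − ρ n₁ n₂/(k₁ k₂) ) ) ≤ ( (k₁ k₂)^θ θ^θ ) / ( (2π)^{2θ} e^θ (1−ρ)^θ ) · ( Σ_{n=1}^{∞} n^{−(θ+1)} )², where the series Σ n^{−(θ+1)} converges (to ζ(θ+1)) since θ > 0. -/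
/-!
Completing the square gives `(1/2)x² + (1/2)y² - ρxy ≥ (1 - ρ)xy` for `x = n₁/k₁`, `y = n₂/k₂`,
so the `(n₁, n₂)` term is at most `(n₁n₂)⁻¹ exp(-c n₁n₂)` with `c = 4π²(1 - ρ)/(k₁k₂)`.
Since `t ↦ t^θ e^{-t}` is maximal at `t = θ`, `exp(-t) ≤ θ^θ e^{-θ} t^{-θ}`; with `t = c n₁n₂`
the term is dominated by `θ^θ e^{-θ} c^{-θ} n₁^{-(θ+1)} n₂^{-(θ+1)}`, whose double series is the
square of a convergent `p`-series.
-/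

open Real

theorem Real.rpow_mul_exp_neg_le {θ t : ℝ} (hθ : 0 < θ) (ht : 0 ≤ t) :
    t ^ θ * exp (-t) ≤ θ ^ θ * exp (-θ) := by
  have hlin : t / θ ≤ exp (t / θ - 1) := by linarith [add_one_le_exp (t / θ - 1)]
  have hpow : (t / θ) ^ θ ≤ exp (t - θ) := by
    calc (t / θ) ^ θ ≤ exp (t / θ - 1) ^ θ := by gcongr
      _ = exp (t - θ) := by rw [← exp_mul]; field_simp
  rw [div_rpow ht hθ.le, div_le_iff₀ (by positivity)] at hpow
  calc t ^ θ * exp (-t) ≤ exp (t - θ) * θ ^ θ * exp (-t) := by gcongr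
    _ = θ ^ θ * exp (-θ) := by
        rw [mul_right_comm, ← exp_add, mul_comm]; ring_nf

theorem Real.inv_mul_mul_exp_neg_le {θ c a b : ℝ} (hθ : 0 < θ) (hc : 0 < c) (ha : 0 < a)
    (hb : 0 < b) :
    (a * b)⁻¹ * exp (-(c * a * b)) ≤
      θ ^ θ / (exp θ * c ^ θ) * a ^ (-(θ + 1)) * b ^ (-(θ + 1)) := by
  have key := rpow_mul_exp_neg_le hθ (by positivity : 0 ≤ c * a * b)
  rw [mul_rpow (by positivity) hb.le, mul_rpow hc.le ha.le] at key
  rw [rpow_neg ha.le, rpow_neg hb.le, rpow_add_one ha.ne', rpow_add_one hb.ne']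
  calc (a * b)⁻¹ * exp (-(c * a * b))
      = c ^ θ * a ^ θ * b ^ θ * exp (-(c * a * b)) / (a * b * (c ^ θ * a ^ θ * b ^ θ)) := by
        field_simp
    _ ≤ θ ^ θ * exp (-θ) / (a * b * (c ^ θ * a ^ θ * b ^ θ)) := by gcongr
    _ = _ := by rw [exp_neg]; field_simp

theorem tsum_tsum_le_mul_tsum_mul_tsum {α β : Type*} {g : α → β → ℝ} {f₁ : α → ℝ} {f₂ : β → ℝ}
    {C : ℝ} (hg : ∀ m n, 0 ≤ g m n) (hle : ∀ m n, g m n ≤ C * f₁ m * f₂ n)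
    (hf₁ : Summable f₁) (hf₂ : Summable f₂) :
    ∑' m, ∑' n, g m n ≤ C * (∑' m, f₁ m) * ∑' n, f₂ n := by
  have hinner : ∀ m, ∑' n, g m n ≤ C * f₁ m * ∑' n, f₂ n := fun m => by
    rw [← tsum_mul_left]
    exact Summable.tsum_le_tsum (hle m) (.of_nonneg_of_le (hg m) (hle m) (hf₂.mul_left _))
      (hf₂.mul_left _)
  have hbound : Summable fun m => C * f₁ m * ∑' n, f₂ n := (hf₁.mul_left C).mul_right _
  calc ∑' m, ∑' n, g m n ≤ ∑' m, C * f₁ m * ∑' n, f₂ n :=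
        Summable.tsum_le_tsum hinner
          (.of_nonneg_of_le (fun m => tsum_nonneg (hg m)) hinner hbound) hbound
    _ = C * (∑' m, f₁ m) * ∑' n, f₂ n := by rw [tsum_mul_right, tsum_mul_left]

theorem inv_mul_mul_exp_neg_quadratic_le {k₁ k₂ ρ θ a b : ℝ} (hk₁ : 0 < k₁) (hk₂ : 0 < k₂)
    (hρ : ρ < 1) (hθ : 0 < θ) (ha : 0 < a) (hb : 0 < b) :
    (a * b)⁻¹ * exp (-(4 * π ^ 2) *
        ((1 / 2) * (a / k₁) ^ 2 + (1 / 2) * (b / k₂) ^ 2 - ρ * a * b / (k₁ * k₂))) ≤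
      θ ^ θ / (exp θ * (4 * π ^ 2 * (1 - ρ) / (k₁ * k₂)) ^ θ) *
        a ^ (-(θ + 1)) * b ^ (-(θ + 1)) := by
  have hc : 0 < 4 * π ^ 2 * (1 - ρ) / (k₁ * k₂) := by
    have : 0 < 1 - ρ := sub_pos.mpr hρ
    positivity
  refine le_trans ?_ (inv_mul_mul_exp_neg_le hθ hc ha hb)
  gcongr
  have hsq : (1 - ρ) * ((a / k₁) * (b / k₂)) ≤
      (1 / 2) * (a / k₁) ^ 2 + (1 / 2) * (b / k₂) ^ 2 - ρ * ((a / k₁) * (b / k₂)) := by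
    nlinarith [sq_nonneg (a / k₁ - b / k₂)]
  calc -(4 * π ^ 2) * ((1 / 2) * (a / k₁) ^ 2 + (1 / 2) * (b / k₂) ^ 2 - ρ * a * b / (k₁ * k₂))
      ≤ -(4 * π ^ 2) * ((1 - ρ) * ((a / k₁) * (b / k₂))) := by
        rw [show ρ * a * b / (k₁ * k₂) = ρ * ((a / k₁) * (b / k₂)) by field_simp]
        have := pi_pos
        nlinarith
    _ = -(4 * π ^ 2 * (1 - ρ) / (k₁ * k₂) * a * b) := by field_simp

theorem Real.two_mul_pi_rpow_two_mul {θ : ℝ} : (2 * π) ^ (2 * θ) = (4 * π ^ 2) ^ θ := by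
  rw [rpow_mul (by positivity)]; norm_num; ring_nf

theorem stmt_12_general (k₁ k₂ ρ θ : ℝ) (hk₁ : 0 < k₁) (hk₂ : 0 < k₂) (hρ1 : ρ < 1)
    (hθ0 : 0 < θ) :
    (∑' (n₁ : ℕ) (n₂ : ℕ), (((n₁ : ℝ) + 1) * ((n₂ : ℝ) + 1))⁻¹ *
        Real.exp (-(4 * Real.pi ^ 2) *
          ((1 / 2) * (((n₁ : ℝ) + 1) / k₁) ^ 2 + (1 / 2) * (((n₂ : ℝ) + 1) / k₂) ^ 2 -
            ρ * ((n₁ : ℝ) + 1) * ((n₂ : ℝ) + 1) / (k₁ * k₂)))) ≤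
      (k₁ * k₂) ^ θ * θ ^ θ / ((2 * Real.pi) ^ (2 * θ) * Real.exp θ * (1 - ρ) ^ θ) *
        (∑' n : ℕ, ((n : ℝ) + 1) ^ (-(θ + 1))) ^ 2 := by
  have hzeta : Summable fun n : ℕ => ((n : ℝ) + 1) ^ (-(θ + 1)) := by
    simpa using (summable_nat_add_iff 1).mpr
      (summable_nat_rpow.mpr (by linarith : -(θ + 1) < -1))
  have hconst : (k₁ * k₂) ^ θ * θ ^ θ / ((2 * π) ^ (2 * θ) * exp θ * (1 - ρ) ^ θ) =
      θ ^ θ / (exp θ * (4 * π ^ 2 * (1 - ρ) / (k₁ * k₂)) ^ θ) := by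
    have := pi_pos
    rw [two_mul_pi_rpow_two_mul, div_rpow (by nlinarith) (by positivity),
      mul_rpow (x := 4 * π ^ 2) (by positivity) (by linarith)]
    field_simp
  rw [hconst, sq (∑' n : ℕ, ((n : ℝ) + 1) ^ (-(θ + 1))), ← mul_assoc]
  refine tsum_tsum_le_mul_tsum_mul_tsum (fun _ _ => ?_) (fun _ _ => ?_) hzeta hzeta
  · positivity
  · exact inv_mul_mul_exp_neg_quadratic_le hk₁ hk₂ hρ1 hθ0
      (Nat.cast_add_one_pos _) (Nat.cast_add_one_pos _)

/-- For `k₁, k₂ > 0`, `0 ≤ ρ < 1` and `0 < θ ≤ 4π²(1−ρ)/(k₁k₂)`, the double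
Gaussian-tail series is bounded by a squared Riemann-zeta type series. -/
theorem stmt_12 (k₁ k₂ ρ θ : ℝ) (hk₁ : 0 < k₁) (hk₂ : 0 < k₂) (hρ0 : 0 ≤ ρ) (hρ1 : ρ < 1)
    (hθ0 : 0 < θ) (hθ : θ ≤ 4 * Real.pi ^ 2 * (1 - ρ) / (k₁ * k₂)) :
    (∑' (n₁ : ℕ) (n₂ : ℕ), (((n₁ : ℝ) + 1) * ((n₂ : ℝ) + 1))⁻¹ *
        Real.exp (-(4 * Real.pi ^ 2) *
          ((1 / 2) * (((n₁ : ℝ) + 1) / k₁) ^ 2 + (1 / 2) * (((n₂ : ℝ) + 1) / k₂) ^ 2 -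
            ρ * ((n₁ : ℝ) + 1) * ((n₂ : ℝ) + 1) / (k₁ * k₂)))) ≤
      (k₁ * k₂) ^ θ * θ ^ θ / ((2 * Real.pi) ^ (2 * θ) * Real.exp θ * (1 - ρ) ^ θ) *
        (∑' n : ℕ, ((n : ℝ) + 1) ^ (-(θ + 1))) ^ 2 :=
  stmt_12_general k₁ k₂ ρ θ hk₁ hk₂ hρ1 hθ0
end
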